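/- Let A be an obligor and z ∈ [0,1]. Then E[D_A · z^X] = E[p_A^S · z^X] · H_A(z). -/

import Mathlib

open MeasureTheory ProbabilityTheory Real Finset

/-- The CreditRisk+ model with random severities: `P` is a probability measure; the
economic factors `S 0, ..., S N` are independent, `S 0 = 1` is constant and `S (k+1)` is
Gamma distributed with shape `shape k` and rate `rate k` (scale `1 / rate k`);
conditionally on `S` the approximate default indicators `(D A)_A` are independent
Poisson variables with intensities `p_A^S = p A * ∑ k, w A k * S k` (this is expressed by
the factorization of the joint conditional pmf); for each obligor `A` the exposures
`E A i`, `i = 0, 1, 2, ...` are i.i.d. copies of `ℰ_A := E A 0`, and the whole family of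
exposures is mutually independent and independent of `(D, S)`. -/
def IsCRModel {Ω : Type} [MeasurableSpace Ω] (P : Measure Ω) {N : ℕ} {𝒜 : Type}
    [Fintype 𝒜] (S : Fin (N + 1) → Ω → ℝ) (D : 𝒜 → Ω → ℕ) (E : 𝒜 → ℕ → Ω → ℕ)
    (p : 𝒜 → ℝ) (w : 𝒜 → Fin (N + 1) → ℝ) (shape rate : Fin N → ℝ) : Prop :=
  IsProbabilityMeasure P ∧
  (∀ k, Measurable (S k)) ∧ (∀ A, Measurable (D A)) ∧ (∀ A i, Measurable (E A i)) ∧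
  (∀ ω, S 0 ω = 1) ∧
  iIndepFun S P ∧
  (∀ k : Fin N, P.map (S k.succ) = gammaMeasure (shape k) (rate k)) ∧
  (∀ (d : 𝒜 → ℕ) (B : Set (Fin (N + 1) → ℝ)), MeasurableSet B →
    P ({ω | ∀ A, D A ω = d A} ∩ {ω | (fun k => S k ω) ∈ B})
      = ∫⁻ ω in {ω | (fun k => S k ω) ∈ B},
          ∏ A, ENNReal.ofReal
            (poissonPMFReal (p A * ∑ k, w A k * S k ω).toNNReal (d A)) ∂P) ∧
  (∀ A i, P.map (E A i) = P.map (E A 0)) ∧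
  iIndepFun (β := fun j : (𝒜 × ℕ) ⊕ Unit =>
      Sum.elim (fun _ => ℕ) (fun _ => ((𝒜 → ℕ) × (Fin (N + 1) → ℝ))) j)
    (m := fun j => Sum.rec (fun _ => inferInstanceAs (MeasurableSpace ℕ))
      (fun _ => inferInstanceAs (MeasurableSpace ((𝒜 → ℕ) × (Fin (N + 1) → ℝ)))) j)
    (fun j => Sum.rec (fun Ai => E Ai.1 Ai.2)
      (fun _ ω => ((fun A => D A ω), (fun k => S k ω))) j) P

/-- The portfolio loss `X = ∑ A, ∑_{i=1}^{D A} ℰ_{A,i}`. -/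
def portfolioLoss {Ω : Type} {𝒜 : Type} [Fintype 𝒜]
    (D : 𝒜 → Ω → ℕ) (E : 𝒜 → ℕ → Ω → ℕ) (ω : Ω) : ℕ :=
  ∑ A, ∑ i ∈ Finset.range (D A ω), E A i ω

/-- The probability generating function `z ↦ 𝔼[z^Y]` of an `ℕ`-valued random variable. -/
noncomputable def pgfN {Ω : Type} [MeasurableSpace Ω] (P : Measure Ω) (Y : Ω → ℕ)
    (z : ℝ) : ℝ :=
  ∫ ω, z ^ Y ω ∂P

/-- The sector default intensity `μ_k = ∑ A, w A k * p A`. -/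
def sectorIntensity {𝒜 : Type} [Fintype 𝒜] {N : ℕ} (p : 𝒜 → ℝ)
    (w : 𝒜 → Fin (N + 1) → ℝ) (k : Fin (N + 1)) : ℝ :=
  ∑ A, w A k * p A

/-- The sector polynomial `Q_k(z) = μ_k⁻¹ * ∑ A, w A k * p A * H_A(z)`, where
`H_A` is the pgf of `ℰ_A = E A 0`. -/
noncomputable def sectorPoly {Ω : Type} {𝒜 : Type} [MeasurableSpace Ω] [Fintype 𝒜]
    {N : ℕ} (P : Measure Ω) (E : 𝒜 → ℕ → Ω → ℕ) (p : 𝒜 → ℝ)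
    (w : 𝒜 → Fin (N + 1) → ℝ) (k : Fin (N + 1)) (z : ℝ) : ℝ :=
  (sectorIntensity p w k)⁻¹ * ∑ A, w A k * p A * pgfN P (E A 0) z

/-- The `j`-th unit vector in `ℝ^N`. -/
def unitVec {N : ℕ} (j : Fin N) : Fin N → ℝ := fun k => if k = j then 1 else 0

open scoped ENNReal NNReal

set_option linter.deprecated false

/-! Conditionally on the defaults `D` and factors `S`, which are independent of the exposures,
`z ^ X` averages to `∏ B, H_B(z) ^ D_B`; so both sides become sums over default vectors `d` of
integrals against the conditional Poisson pmf `φ_d(s)` of `D` given `S = s`. The Poisson identity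
`n π_λ(n) = λ π_λ(n - 1)` turns the weight `d_A φ_d` into `p_A^s φ_(d - e_A)`, and the shift
`d ↦ d + e_A` of the summation index produces the extra factor `H_A(z)`. -/

lemma ProbabilityTheory.natCast_succ_mul_poissonPMFReal_succ (r : ℝ≥0) (n : ℕ) :
    ((n + 1 : ℕ) : ℝ) * poissonPMFReal r (n + 1) = r * poissonPMFReal r n := by
  simp only [poissonPMFReal, pow_succ, Nat.factorial_succ, Nat.cast_mul]
  field_simp

lemma tsum_eq_tsum_update_succ {ι α : Type*} [DecidableEq ι] [AddCommMonoid α]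
    [TopologicalSpace α] (i : ι) {F : (ι → ℕ) → α} (hF : ∀ d, d i = 0 → F d = 0) :
    ∑' d, F d = ∑' d, F (Function.update d i (d i + 1)) := by
  refine (Function.Injective.tsum_eq (fun d d' h => funext fun k => ?_) fun d hd => ?_).symm
  · have hk := congrFun h k
    by_cases hki : k = i
    · subst hki
      simpa using hk
    · simpa [hki] using hk
  · refine ⟨Function.update d i (d i - 1), ?_⟩
    have : d i ≠ 0 := fun h0 => hd (hF d h0)
    simp [Nat.sub_add_cancel (Nat.pos_of_ne_zero this)]

lemma Finset.prod_pow_update_succ {ι M : Type*} [Fintype ι] [DecidableEq ι] [CommMonoid M]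
    (c : ι → M) (d : ι → ℕ) (i : ι) :
    ∏ j, c j ^ Function.update d i (d i + 1) j = c i * ∏ j, c j ^ d j := by
  simp only [← Finset.mul_prod_erase _ _ (Finset.mem_univ i), Function.update_self, pow_succ]
  rw [mul_comm (c i ^ d i), mul_assoc]
  congr 2
  exact Finset.prod_congr rfl fun j hj => by rw [Function.update_of_ne (Finset.ne_of_mem_erase hj)]

lemma ProbabilityTheory.ae_nonneg_gammaMeasure (a r : ℝ) : ∀ᵐ x ∂gammaMeasure a r, 0 ≤ x := by
  have hneg : {x : ℝ | ¬0 ≤ x} = Set.Iio 0 := by ext; simp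
  rw [ae_iff, hneg, gammaMeasure, withDensity_apply _ measurableSet_Iio]
  exact lintegral_gammaPDF_of_nonpos le_rfl

section CreditRiskPlus

variable {Ω 𝒜 : Type} {N : ℕ}

def condIntensity (p : 𝒜 → ℝ) (w : 𝒜 → Fin (N + 1) → ℝ) (A : 𝒜) (s : Fin (N + 1) → ℝ) : ℝ :=
  p A * ∑ k, w A k * s k

lemma measurable_condIntensity (p : 𝒜 → ℝ) (w : 𝒜 → Fin (N + 1) → ℝ) (A : 𝒜) :
    Measurable (condIntensity p w A) := by
  unfold condIntensity
  fun_prop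

variable [Fintype 𝒜]

noncomputable def condDefaultPMF (p : 𝒜 → ℝ) (w : 𝒜 → Fin (N + 1) → ℝ) (d : 𝒜 → ℕ)
    (s : Fin (N + 1) → ℝ) : ℝ≥0∞ :=
  ∏ A, ENNReal.ofReal (poissonPMFReal (condIntensity p w A s).toNNReal (d A))

lemma measurable_condDefaultPMF (p : 𝒜 → ℝ) (w : 𝒜 → Fin (N + 1) → ℝ) (d : 𝒜 → ℕ) :
    Measurable (condDefaultPMF p w d) := by
  unfold condDefaultPMF condIntensity poissonPMFReal
  fun_prop

lemma natCast_succ_mul_condDefaultPMF_update [DecidableEq 𝒜] (p : 𝒜 → ℝ)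
    (w : 𝒜 → Fin (N + 1) → ℝ) (A : 𝒜) (d : 𝒜 → ℕ) (s : Fin (N + 1) → ℝ) :
    ((d A + 1 : ℕ) : ℝ≥0∞) * condDefaultPMF p w (Function.update d A (d A + 1)) s
      = ENNReal.ofReal (condIntensity p w A s) * condDefaultPMF p w d s := by
  have hA : ((d A + 1 : ℕ) : ℝ≥0∞)
        * ENNReal.ofReal (poissonPMFReal (condIntensity p w A s).toNNReal (d A + 1))
      = ENNReal.ofReal (condIntensity p w A s)
        * ENNReal.ofReal (poissonPMFReal (condIntensity p w A s).toNNReal (d A)) := by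
    rw [← ENNReal.ofReal_natCast, ← ENNReal.ofReal_mul (Nat.cast_nonneg _),
      natCast_succ_mul_poissonPMFReal_succ, ENNReal.ofReal_mul (NNReal.coe_nonneg _),
      ENNReal.ofReal_coe_nnreal]
    rfl
  simp only [condDefaultPMF, ← Finset.mul_prod_erase _ _ (Finset.mem_univ A),
    Function.update_self, ← mul_assoc, hA]
  congr 1
  refine Finset.prod_congr rfl fun B hB => ?_
  rw [Function.update_of_ne (Finset.ne_of_mem_erase hB)]

lemma ofReal_pow_portfolioLoss {z : ℝ} (hz : 0 ≤ z) (D : 𝒜 → Ω → ℕ) (E : 𝒜 → ℕ → Ω → ℕ)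
    (ω : Ω) :
    ENNReal.ofReal (z ^ portfolioLoss D E ω)
      = ∏ A, ∏ i ∈ Finset.range (D A ω), ENNReal.ofReal (z ^ E A i ω) := by
  simp only [portfolioLoss, ← Finset.prod_pow_eq_pow_sum]
  rw [ENNReal.ofReal_prod_of_nonneg fun _ _ => Finset.prod_nonneg fun _ _ => pow_nonneg hz _]
  exact Finset.prod_congr rfl fun A _ =>
    ENNReal.ofReal_prod_of_nonneg fun _ _ => pow_nonneg hz _

variable [MeasurableSpace Ω]

lemma measurable_portfolioLoss {D : 𝒜 → Ω → ℕ} {E : 𝒜 → ℕ → Ω → ℕ}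
    (hD : ∀ A, Measurable (D A)) (hE : ∀ A i, Measurable (E A i)) :
    Measurable (portfolioLoss D E) := by
  have hpartial : Measurable fun q : (ℕ → ℕ) × ℕ => ∑ i ∈ Finset.range q.2, q.1 i :=
    measurable_from_prod_countable_left fun n =>
      Finset.measurable_sum (Finset.range n) fun i _ => measurable_pi_apply i
  exact Finset.measurable_sum _ fun A _ =>
    hpartial.comp ((measurable_pi_lambda _ (hE A)).prodMk (hD A))

namespace IsCRModel

variable {P : Measure Ω} {S : Fin (N + 1) → Ω → ℝ} {D : 𝒜 → Ω → ℕ} {E : 𝒜 → ℕ → Ω → ℕ}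
  {p : 𝒜 → ℝ} {w : 𝒜 → Fin (N + 1) → ℝ} {shape rate : Fin N → ℝ}

lemma measurableSet_defaults_eq (hM : IsCRModel P S D E p w shape rate) (d : 𝒜 → ℕ) :
    MeasurableSet {ω | (fun A => D A ω) = d} :=
  measurable_pi_lambda _ hM.2.2.1 (measurableSet_singleton d)

lemma setLIntegral_defaults_eq (hM : IsCRModel P S D E p w shape rate)
    {ψ : (Fin (N + 1) → ℝ) → ℝ≥0∞} (hψ : Measurable ψ) (d : 𝒜 → ℕ) :
    ∫⁻ ω in {ω | (fun A => D A ω) = d}, ψ (fun k => S k ω) ∂P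
      = ∫⁻ s, ψ s * condDefaultPMF p w d s ∂P.map (fun ω k => S k ω) := by
  obtain ⟨-, hS, -, -, -, -, -, hcond, -⟩ := hM
  have hSvec : Measurable fun ω k => S k ω := measurable_pi_lambda _ hS
  have hlaw : (P.restrict {ω | (fun A => D A ω) = d}).map (fun ω k => S k ω)
      = (P.map fun ω k => S k ω).withDensity (condDefaultPMF p w d) := by
    ext B hB
    rw [Measure.map_apply hSvec hB, Measure.restrict_apply (hSvec hB), withDensity_apply _ hB,
      setLIntegral_map hB (measurable_condDefaultPMF p w d) hSvec, Set.inter_comm]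
    simp only [funext_iff]
    exact hcond d B hB
  rw [← lintegral_map hψ hSvec, hlaw,
    lintegral_withDensity_eq_lintegral_mul _ (measurable_condDefaultPMF p w d) hψ]
  simp only [Pi.mul_apply, mul_comm]

lemma lintegral_mul_prod_exposures (hM : IsCRModel P S D E p w shape rate)
    {g : (𝒜 → ℕ) × (Fin (N + 1) → ℝ) → ℝ≥0∞} (hg : Measurable g) (h : ℕ → ℝ≥0∞)
    (d : 𝒜 → ℕ) :
    ∫⁻ ω, g ((fun A => D A ω), fun k => S k ω)
        * ∏ B, ∏ i ∈ Finset.range (d B), h (E B i ω) ∂P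
      = (∫⁻ ω, g ((fun A => D A ω), fun k => S k ω) ∂P)
        * ∏ B, (∫⁻ ω, h (E B 0 ω) ∂P) ^ d B := by
  classical
  obtain ⟨-, hS, hD, hE, -, -, -, -, hid, hindep⟩ := hM
  -- `X` is the model's independent family composed with `G`, in non-dependent form.
  let X : (𝒜 × ℕ) ⊕ Unit → Ω → ℝ≥0∞ :=
    Sum.elim (fun Bi ω => h (E Bi.1 Bi.2 ω)) fun _ ω => g ((fun A => D A ω), fun k => S k ω)
  let G : ∀ j : (𝒜 × ℕ) ⊕ Unit,
      Sum.elim (fun _ => ℕ) (fun _ => (𝒜 → ℕ) × (Fin (N + 1) → ℝ)) j → ℝ≥0∞ :=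
    fun j => Sum.rec (fun _ => h) (fun _ => g) j
  have hX : iIndepFun X P := by
    convert hindep.comp G
      (by rintro (_ | _)
          · exact measurable_from_nat
          · exact hg) using 1
    funext j
    cases j <;> rfl
  have hXmeas : ∀ j, Measurable (X j) := by
    rintro (⟨B, i⟩ | _)
    · exact measurable_from_nat.comp (hE B i)
    · exact hg.comp ((measurable_pi_lambda _ hD).prodMk (measurable_pi_lambda _ hS))
  have hlaw : ∀ B i, ∫⁻ ω, h (E B i ω) ∂P = ∫⁻ ω, h (E B 0 ω) ∂P := fun B i => by
    rw [← lintegral_map measurable_from_nat (hE B i), hid B i,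
      lintegral_map measurable_from_nat (hE B 0)]
  let T : Finset ((𝒜 × ℕ) ⊕ Unit) := (Finset.univ.sigma fun B => Finset.range (d B)).map
    ((Equiv.sigmaEquivProd 𝒜 ℕ).toEmbedding.trans .inl)
  have key := lintegral_prod_eq_prod_lintegral_of_indepFun (insert (Sum.inr ()) T) X hX hXmeas
  simpa [T, X, Finset.prod_sigma, hlaw] using key

lemma lintegral_mul_prod_exposures_eq_tsum (hM : IsCRModel P S D E p w shape rate)
    {g : (𝒜 → ℕ) → (Fin (N + 1) → ℝ) → ℝ≥0∞} (hg : ∀ d, Measurable (g d)) (h : ℕ → ℝ≥0∞) :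
    ∫⁻ ω, g (fun A => D A ω) (fun k => S k ω)
        * ∏ B, ∏ i ∈ Finset.range (D B ω), h (E B i ω) ∂P
      = ∑' d, (∫⁻ s, g d s * condDefaultPMF p w d s ∂P.map (fun ω k => S k ω))
        * ∏ B, (∫⁻ ω, h (E B 0 ω) ∂P) ^ d B := by
  classical
  have ⟨_, hS, hD, hE, _⟩ := hM
  let gd (d : 𝒜 → ℕ) : (𝒜 → ℕ) × (Fin (N + 1) → ℝ) → ℝ≥0∞ :=
    {q | q.1 = d}.indicator fun q => g d q.2
  have hgd (d) : Measurable (gd d) :=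
    ((hg d).comp measurable_snd).indicator (measurable_fst (measurableSet_singleton d))
  have hsplit (ω : Ω) : g (fun A => D A ω) (fun k => S k ω)
        * ∏ B, ∏ i ∈ Finset.range (D B ω), h (E B i ω)
      = ∑' d, gd d ((fun A => D A ω), fun k => S k ω)
        * ∏ B, ∏ i ∈ Finset.range (d B), h (E B i ω) := by
    rw [tsum_eq_single (fun A => D A ω) fun d hd => ?_]
    · simp [gd]
    · simp [gd, Ne.symm hd]
  have hmeas (d) : Measurable fun ω => gd d ((fun A => D A ω), fun k => S k ω)
      * ∏ B, ∏ i ∈ Finset.range (d B), h (E B i ω) :=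
    ((hgd d).comp ((measurable_pi_lambda _ hD).prodMk (measurable_pi_lambda _ hS))).mul
      (Finset.measurable_prod _ fun B _ => Finset.measurable_prod _ fun i _ =>
        measurable_from_nat.comp (hE B i))
  rw [lintegral_congr hsplit, lintegral_tsum fun d => (hmeas d).aemeasurable]
  refine tsum_congr fun d => ?_
  rw [hM.lintegral_mul_prod_exposures (hgd d) h d]
  congr 1
  rw [← hM.setLIntegral_defaults_eq (hg d) d,
    ← lintegral_indicator (hM.measurableSet_defaults_eq d)]
  rfl

lemma ae_condIntensity_nonneg (hM : IsCRModel P S D E p w shape rate) (hp : ∀ A, 0 ≤ p A)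
    (hw : ∀ A k, 0 ≤ w A k) (A : 𝒜) :
    ∀ᵐ ω ∂P, 0 ≤ condIntensity p w A (fun k => S k ω) := by
  obtain ⟨-, hS, -, -, hS0, -, hgamma, -⟩ := hM
  have hSnonneg (k : Fin (N + 1)) : ∀ᵐ ω ∂P, 0 ≤ S k ω := by
    induction k using Fin.cases with
    | zero => exact ae_of_all _ fun ω => (hS0 ω).symm ▸ zero_le_one
    | succ k =>
      exact ae_of_ae_map (hS k.succ).aemeasurable ((hgamma k).symm ▸ ae_nonneg_gammaMeasure _ _)
  filter_upwards [ae_all_iff.2 hSnonneg] with ω hω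
  exact mul_nonneg (hp A) (Finset.sum_nonneg fun k _ => mul_nonneg (hw A k) (hω k))

lemma lintegral_natCast_default_mul_prod_exposures (hM : IsCRModel P S D E p w shape rate)
    (A : 𝒜) (h : ℕ → ℝ≥0∞) :
    ∫⁻ ω, (D A ω : ℝ≥0∞) * ∏ B, ∏ i ∈ Finset.range (D B ω), h (E B i ω) ∂P
      = (∫⁻ ω, ENNReal.ofReal (condIntensity p w A (fun k => S k ω))
          * ∏ B, ∏ i ∈ Finset.range (D B ω), h (E B i ω) ∂P) * ∫⁻ ω, h (E A 0 ω) ∂P := by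
  classical
  have hintensity : Measurable fun s => ENNReal.ofReal (condIntensity p w A s) :=
    ENNReal.measurable_ofReal.comp (measurable_condIntensity p w A)
  rw [hM.lintegral_mul_prod_exposures_eq_tsum (g := fun d _ => (d A : ℝ≥0∞))
      (fun _ => measurable_const) h,
    hM.lintegral_mul_prod_exposures_eq_tsum (g := fun _ s => ENNReal.ofReal (condIntensity p w A s))
      (fun _ => hintensity) h,
    tsum_eq_tsum_update_succ A fun d hd => by simp [hd], ← ENNReal.tsum_mul_right]
  refine tsum_congr fun d => ?_
  simp only [Function.update_self, Finset.prod_pow_update_succ,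
    natCast_succ_mul_condDefaultPMF_update]
  ring

end IsCRModel

end CreditRiskPlus

theorem default_pgf_factorization_general
    {Ω : Type} {𝒜 : Type} [MeasurableSpace Ω] [Fintype 𝒜] {N : ℕ}
    (P : Measure Ω) (S : Fin (N + 1) → Ω → ℝ) (D : 𝒜 → Ω → ℕ) (E : 𝒜 → ℕ → Ω → ℕ)
    (p : 𝒜 → ℝ) (w : 𝒜 → Fin (N + 1) → ℝ) (α : Fin N → ℝ)
    (hp : ∀ A, 0 ≤ p A)
    (hw0 : ∀ A k, 0 ≤ w A k)
    (hM : IsCRModel P S D E p w α α)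
    (A : 𝒜) (z : ℝ) (hz : z ∈ Set.Icc (0 : ℝ) 1) :
    ∫ ω, (D A ω : ℝ) * z ^ portfolioLoss D E ω ∂P
      = (∫ ω, (p A * ∑ k, w A k * S k ω) * z ^ portfolioLoss D E ω ∂P)
        * pgfN P (E A 0) z := by
  have ⟨_, hS, hD, hE, _⟩ := hM
  have hz0 : 0 ≤ z := hz.1
  have hzX : Measurable fun ω => z ^ portfolioLoss D E ω :=
    measurable_from_nat.comp (measurable_portfolioLoss hD hE)
  have hDA : Measurable fun ω => (D A ω : ℝ) := measurable_from_nat.comp (hD A)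
  have hzE : Measurable fun ω => z ^ E A 0 ω := measurable_from_nat.comp (hE A 0)
  have hintensity : Measurable fun ω => p A * ∑ k, w A k * S k ω :=
    (measurable_condIntensity p w A).comp (measurable_pi_lambda _ hS)
  -- Nonnegative integrands: each Bochner integral is the `toReal` of a lintegral, with no
  -- integrability side condition.
  rw [integral_eq_lintegral_of_nonneg_ae (ae_of_all _ fun ω => by positivity)
      (hDA.fun_mul hzX).aestronglyMeasurable,
    integral_eq_lintegral_of_nonneg_ae
      (by filter_upwards [hM.ae_condIntensity_nonneg hp hw0 A] with ω hω
          exact mul_nonneg hω (pow_nonneg hz0 _))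
      (hintensity.fun_mul hzX).aestronglyMeasurable,
    pgfN, integral_eq_lintegral_of_nonneg_ae (ae_of_all _ fun ω => by positivity)
      hzE.aestronglyMeasurable,
    ← ENNReal.toReal_mul]
  congr 1
  simp only [ENNReal.ofReal_mul (Nat.cast_nonneg _), ENNReal.ofReal_mul' (pow_nonneg hz0 _),
    ENNReal.ofReal_natCast, ofReal_pow_portfolioLoss hz0]
  exact hM.lintegral_natCast_default_mul_prod_exposures A fun n => ENNReal.ofReal (z ^ n)

/-- For an obligor `A` and `z ∈ [0,1]`: `𝔼[D_A z^X] = 𝔼[p_A^S z^X] * H_A(z)`. -/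
theorem default_pgf_factorization
    {Ω : Type} {𝒜 : Type} [MeasurableSpace Ω] [Fintype 𝒜] {N : ℕ} (hN : 1 ≤ N)
    (P : Measure Ω) (S : Fin (N + 1) → Ω → ℝ) (D : 𝒜 → Ω → ℕ) (E : 𝒜 → ℕ → Ω → ℕ)
    (p : 𝒜 → ℝ) (w : 𝒜 → Fin (N + 1) → ℝ) (α : Fin N → ℝ)
    (hα : ∀ k, 0 < α k) (hp : ∀ A, 0 ≤ p A)
    (hw0 : ∀ A k, 0 ≤ w A k) (hw1 : ∀ A k, w A k ≤ 1)
    (hwsum : ∀ A, ∑ k, w A k = 1)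
    (hM : IsCRModel P S D E p w α α)
    (A : 𝒜) (z : ℝ) (hz : z ∈ Set.Icc (0 : ℝ) 1) :
    ∫ ω, (D A ω : ℝ) * z ^ portfolioLoss D E ω ∂P
      = (∫ ω, (p A * ∑ k, w A k * S k ω) * z ^ portfolioLoss D E ω ∂P)
        * pgfN P (E A 0) z :=
  default_pgf_factorization_general P S D E p w α hp hw0 hM A z hz
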